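/- arXiv:1106.1936 — 3 statements merged into one kernel-verified Lean document; each statement's English description precedes it below -/
import Mathlib

section
/- Let p be an odd prime and a_p ∈ ℤ with p | a_p, and define matrices over ℤ_p[[X]]: A = [[a_p, 1], [-1, 0]], C_i = [[a_p, 1], [-Φ_i(1+X), 0]] for i ≥ 1, and H_n = -C_1 ⋯ C_n A^{-1} for n ≥ 1. Writing H_n = [[ω_n^♯, Φ_n ω_{n-1}^♯], [ω_n^♭, Φ_n ω_{n-1}^♭]], one has ω_n^♯ ω_{n-1}^♭ - ω_{n-1}^♯ ω_n^♭ = ± Π_{i=1}^{n-1} Φ_i(1+X). -/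
private lemma aux_list_range_prod {M : Type*} [CommMonoid M] (f : ℕ → M) (m : ℕ) :
    ((List.range m).map f).prod = ∏ i ∈ Finset.range m, f i := by
  induction m with
  | zero => simp
  | succ k ih => rw [List.range_succ, List.map_append, List.prod_append,
      Finset.prod_range_succ, ih]; simp

private lemma aux_Icc_range {M : Type*} [CommMonoid M] (f : ℕ → M) (m : ℕ) :
    ∏ i ∈ Finset.Icc 1 m, f i = ∏ i ∈ Finset.range m, f (i + 1) := by
  induction m with
  | zero => simp
  | succ k ih => rw [Finset.prod_range_succ, ← ih, Finset.prod_Icc_succ_top (by omega)]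

private lemma aux_det_list_prod {R : Type*} [CommRing R]
    (l : List (Matrix (Fin 2) (Fin 2) R)) :
    l.prod.det = (l.map Matrix.det).prod := by
  induction l with
  | nil => simp
  | cons a l ih => rw [List.prod_cons, Matrix.det_mul, ih, List.map_cons, List.prod_cons]

/-- Let `p` be an odd prime, `a_p ∈ ℤ_p` with `p ∣ a_p`, and over `ℤ_p[[X]]` set
`A = [[a_p, 1], [-1, 0]]`, `C_i = [[a_p, 1], [-Φ_i(1+X), 0]]`, `H_0 = -A⁻¹`, and
`H_m = -C_1 ⋯ C_m A⁻¹` for `m ≥ 1`. Writing `H_m = [[ω_m^♯, *], [ω_m^♭, *]]` (so that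
`ω_m^♯ = (H_m)₀₀` and `ω_m^♭ = (H_m)₁₀`), the determinant identity gives
`ω_n^♯ ω_{n-1}^♭ - ω_{n-1}^♯ ω_n^♭ = ± ∏_{i=1}^{n-1} Φ_i(1+X)`. -/
theorem sharp_flat_determinant_identity (p : ℕ) [Fact p.Prime] (hodd : Odd p)
    (a : ℤ_[p]) (ha : (p : ℤ_[p]) ∣ a) (n : ℕ) (hn : 1 ≤ n) :
    let R := PowerSeries ℤ_[p]
    let Φ : ℕ → R := fun i => ∑ t ∈ Finset.range p, (1 + PowerSeries.X) ^ (p ^ (i - 1) * t)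
    let A : Matrix (Fin 2) (Fin 2) R := Matrix.of ![![PowerSeries.C a, 1], ![-1, 0]]
    let Cm : ℕ → Matrix (Fin 2) (Fin 2) R := fun i =>
      Matrix.of ![![PowerSeries.C a, 1], ![-(Φ i), 0]]
    let H : ℕ → Matrix (Fin 2) (Fin 2) R := fun m =>
      if m = 0 then -A⁻¹ else -(((List.range m).map (fun i => Cm (i + 1))).prod * A⁻¹)
    H n 0 0 * H (n - 1) 1 0 - H (n - 1) 0 0 * H n 1 0 = ∏ i ∈ Finset.Icc 1 (n - 1), Φ i ∨
    H n 0 0 * H (n - 1) 1 0 - H (n - 1) 0 0 * H n 1 0 = -∏ i ∈ Finset.Icc 1 (n - 1), Φ i := by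
  intro R Φ A Cm H
  left
  set B : Matrix (Fin 2) (Fin 2) R :=
    Matrix.of ![![0, -1], ![1, PowerSeries.C a]] with hB
  have hAB : A * B = 1 := by
    ext i j : 1
    fin_cases i <;> fin_cases j <;>
      simp [A, B, Matrix.mul_apply, Fin.sum_univ_two, Matrix.one_apply] <;> ring
  have hAinv : A⁻¹ = B := Matrix.inv_eq_right_inv hAB
  set P : ℕ → Matrix (Fin 2) (Fin 2) R :=
    fun k => ((List.range k).map (fun i => Cm (i + 1))).prod with hP
  have hH : ∀ k, H k = -(P k * B) := by
    intro k
    simp only [H, hAinv, hP]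
    split
    · subst ‹k = 0›; simp
    · rfl
  obtain ⟨m, rfl⟩ : ∃ m, n = m + 1 := ⟨n - 1, (Nat.succ_pred_eq_of_pos hn).symm⟩
  have hm : m + 1 - 1 = m := rfl
  have hPsucc : P (m + 1) = P m * Cm (m + 1) := by
    simp [hP, List.range_succ]
  have hCB : Cm (m + 1) * B = Matrix.of ![![1, 0], ![0, Φ (m + 1)]] := by
    ext i j : 1
    fin_cases i <;> fin_cases j <;>
      simp [Cm, B, Matrix.mul_apply, Fin.sum_univ_two] <;> ring
  have e1 : H (m + 1) 0 0 = -(P m 0 0) := by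
    rw [hH, hPsucc, Matrix.mul_assoc, hCB]
    simp [Matrix.mul_apply, Fin.sum_univ_two]
  have e2 : H (m + 1) 1 0 = -(P m 1 0) := by
    rw [hH, hPsucc, Matrix.mul_assoc, hCB]
    simp [Matrix.mul_apply, Fin.sum_univ_two]
  have e3 : H m 0 0 = -(P m 0 1) := by
    rw [hH]
    simp [Matrix.mul_apply, Fin.sum_univ_two, B]
  have e4 : H m 1 0 = -(P m 1 1) := by
    rw [hH]
    simp [Matrix.mul_apply, Fin.sum_univ_two, B]
  have hdetC : ∀ i, (Cm i).det = Φ i := by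
    intro i
    simp [Cm, Matrix.det_fin_two]
  have hdet : (P m).det = ∏ i ∈ Finset.Icc 1 m, Φ i := by
    rw [hP]
    rw [aux_det_list_prod, List.map_map]
    have : (Matrix.det ∘ fun i => Cm (i + 1)) = fun i => Φ (i + 1) := by
      funext i
      simp [Function.comp, hdetC]
    rw [this, aux_list_range_prod, ← aux_Icc_range]
  rw [hm, e1, e2, e3, e4, ← hdet, Matrix.det_fin_two]
  ring
end

section
/- Let p be a prime and, for m ≥ 1, define valuation matrices V_i = [[v, 0],[p^{i-n}, ∞]] for 1 ≤ i < n and V_n = [[0, ?],[∞, ∞]] with entries in ℝ ∪ {∞}, multiplied by the tropical rule (min, +): (V·W)_{jk} = min_l (V_{jl} + W_{lk}). Suppose v ≥ 1 (v may be ∞). Then the left column of the tropical product V_{n-1}' := ([[v,0],[p^{1-n},∞]]·[[v,0],[p^{2-n},∞]] ⋯ [[v,0],[p^{-1},∞]]) · [[0,?],[∞,∞]] equals (v + p^{-2} + p^{-4} + ⋯ + p^{2-n}, p^{-1} + p^{-3} + ⋯ + p^{1-n}) when n is even, and (p^{-1} + p^{-3} + ⋯ + p^{2-n}, v + p^{-2}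 + p^{-4} + ⋯ + p^{1-n}) when n is odd. -/
/-- Tropical (min, +) multiplication of 2×2 matrices with entries in `ℝ ∪ {∞}`. -/
noncomputable def tropMul (A B : Matrix (Fin 2) (Fin 2) (WithTop ℝ)) : Matrix (Fin 2) (Fin 2) (WithTop ℝ) :=
  Matrix.of fun j k => min (A j 0 + B 0 k) (A j 1 + B 1 k)

/-- The tropical identity matrix `[[0, ∞], [∞, 0]]`. -/
noncomputable def tropOne : Matrix (Fin 2) (Fin 2) (WithTop ℝ) := Matrix.of ![![0, ⊤], ![⊤, 0]]

/-!
Right multiplication by `[[v, 0], [x, ∞]]` sends each row `(a, b)` to `(min (a + v) (b + x), a)`,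
so the left column of `V₁ ⋯ V_m` obeys the recurrence
`a_{m+2} = min (a_{m+1} + v) (a_m + x_{m+2})` with `x_i = p^{i-n}`. As the `x_i` increase and
stay below `1 ≤ v`, the minimum alternates between its two arguments: `a_m = x_m + x_{m-2} + ⋯`
at one parity of `m` and `a_m = v + x_{m-1} + x_{m-3} + ⋯` at the other, row 0 starting from
`(a_0, a_1) = (0, v)` and row 1 from `(a_1, a_2) = (x_1, v + x_1)`. The last factor `V_n` merely
reads off the left column.
-/

open Finset

def sameParitySum (x : ℕ → ℝ) : ℕ → ℝ
  | 0 => 0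
  | 1 => x 1
  | m + 2 => sameParitySum x m + x (m + 2)

theorem sameParitySum_eq_sum_range (x : ℕ → ℝ) (m : ℕ) :
    sameParitySum x m = ∑ k ∈ range ((m + 1) / 2), x (m - 2 * k) := by
  induction m using Nat.twoStepInduction with
  | zero => simp [sameParitySum]
  | one => simp [sameParitySum]
  | more m ih _ =>
    rw [sameParitySum, ih, show (m + 2 + 1) / 2 = (m + 1) / 2 + 1 by omega, sum_range_succ']
    exact congrArg₂ _ (sum_congr rfl fun k _ => by congr 1; omega) rfl

theorem sameParitySum_zpow (b : ℝ) (n m t : ℕ) (f : ℕ → ℤ) (ht : (m + 1) / 2 = t)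
    (hf : ∀ k, (m : ℤ) + 2 - n - 2 * k = f k) :
    sameParitySum (fun i => b ^ ((i : ℤ) - n)) m = ∑ k ∈ Icc 1 t, b ^ f k := by
  rw [sameParitySum_eq_sum_range, ht, ← Ico_add_one_right_eq_Icc, sum_Ico_eq_sum_range,
    Nat.add_sub_cancel]
  refine sum_congr rfl fun k hk => ?_
  have := mem_range.1 hk
  rw [← hf]
  congr 1
  omega

section MinPlusRecurrence

variable {v : WithTop ℝ} {x : ℕ → ℝ} {a : ℕ → WithTop ℝ}

theorem min_add_add_eq_of_le_add (e y : ℝ) (hy : (y : WithTop ℝ) ≤ v + v) :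
    min (v + e + v) (e + y) = ((e + y : ℝ) : WithTop ℝ) := by
  rw [min_eq_right, WithTop.coe_add]
  calc (e : WithTop ℝ) + y ≤ e + (v + v) := by gcongr
    _ = v + e + v := by ac_rfl

theorem min_add_add_eq_of_le (e y y' : ℝ) (h : y ≤ y') :
    min (((e + y : ℝ) : WithTop ℝ) + v) (v + e + y') = v + ((e + y : ℝ) : WithTop ℝ) := by
  rw [min_eq_left, add_comm]
  calc ((e + y : ℝ) : WithTop ℝ) + v ≤ ((e + y' : ℝ) : WithTop ℝ) + v := by
        gcongr; exact WithTop.coe_le_coe.2 (by linarith)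
    _ = v + e + y' := by rw [WithTop.coe_add]; ac_rfl

theorem minPlus_recurrence_eq (N : ℕ) (hx : Monotone x) (hxv : ∀ i ≤ N, (x i : WithTop ℝ) ≤ v + v)
    (hrec : ∀ m, a (m + 2) = min (a (m + 1) + v) (a m + x (m + 2))) (s : ℕ)
    (h₀ : a s = sameParitySum x s) (h₁ : a (s + 1) = v + sameParitySum x s) (k : ℕ)
    (hk : s + 2 * k + 1 ≤ N) :
    a (s + 2 * k) = sameParitySum x (s + 2 * k) ∧
      a (s + 2 * k + 1) = v + sameParitySum x (s + 2 * k) := by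
  induction k with
  | zero => exact ⟨h₀, h₁⟩
  | succ k ih =>
    obtain ⟨ih₀, ih₁⟩ := ih (by omega)
    set m := s + 2 * k
    rw [show s + 2 * (k + 1) = m + 2 by omega]
    have hm₂ : a (m + 2) = sameParitySum x (m + 2) := by
      rw [hrec, ih₀, ih₁, sameParitySum]
      exact min_add_add_eq_of_le_add _ _ (hxv _ (by omega))
    refine ⟨hm₂, ?_⟩
    rw [show m + 2 + 1 = m + 1 + 2 by rfl, hrec, hm₂, ih₁, sameParitySum]
    exact min_add_add_eq_of_le _ _ _ (hx (by omega))

end MinPlusRecurrence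

section Products

def tropStep (v : WithTop ℝ) (y : ℝ) : Matrix (Fin 2) (Fin 2) (WithTop ℝ) :=
  Matrix.of ![![v, 0], ![(y : WithTop ℝ), ⊤]]

noncomputable def tropProd (W : ℕ → Matrix (Fin 2) (Fin 2) (WithTop ℝ)) (m : ℕ) :
    Matrix (Fin 2) (Fin 2) (WithTop ℝ) :=
  (List.range m).foldl (fun M i => tropMul M (W (i + 1))) tropOne

variable {v : WithTop ℝ} {x : ℕ → ℝ} {W W' : ℕ → Matrix (Fin 2) (Fin 2) (WithTop ℝ)}

theorem tropOne_tropMul (A : Matrix (Fin 2) (Fin 2) (WithTop ℝ)) : tropMul tropOne A = A := by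
  ext j k
  fin_cases j <;> simp [tropMul, tropOne]

theorem tropMul_tropStep_apply_zero (M : Matrix (Fin 2) (Fin 2) (WithTop ℝ)) (y : ℝ) (j : Fin 2) :
    tropMul M (tropStep v y) j 0 = min (M j 0 + v) (M j 1 + y) := rfl

theorem tropMul_tropStep_apply_one (M : Matrix (Fin 2) (Fin 2) (WithTop ℝ)) (y : ℝ) (j : Fin 2) :
    tropMul M (tropStep v y) j 1 = M j 0 := by
  simp [tropMul, tropStep]

theorem tropMul_of_zero_top_apply_zero (M : Matrix (Fin 2) (Fin 2) (WithTop ℝ)) (c : WithTop ℝ)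
    (j : Fin 2) : tropMul M (Matrix.of ![![0, c], ![⊤, ⊤]]) j 0 = M j 0 := by
  simp [tropMul]

@[simp]
theorem tropProd_zero : tropProd W 0 = tropOne := rfl

theorem tropProd_succ (m : ℕ) : tropProd W (m + 1) = tropMul (tropProd W m) (W (m + 1)) := by
  rw [tropProd, List.range_succ, List.foldl_append, List.foldl_cons, List.foldl_nil, tropProd]

theorem tropProd_one : tropProd W 1 = W 1 := by
  rw [tropProd_succ, tropProd_zero, tropOne_tropMul]

theorem tropProd_congr {m : ℕ} (h : ∀ i, 1 ≤ i → i ≤ m → W i = W' i) :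
    tropProd W m = tropProd W' m := by
  induction m with
  | zero => rfl
  | succ m ih =>
    rw [tropProd_succ, tropProd_succ, ih fun i h₁ h₂ => h i h₁ (by omega), h _ (by omega) le_rfl]

theorem tropProd_tropStep_recurrence (j : Fin 2) (m : ℕ) :
    tropProd (fun i => tropStep v (x i)) (m + 2) j 0 =
      min (tropProd (fun i => tropStep v (x i)) (m + 1) j 0 + v)
        (tropProd (fun i => tropStep v (x i)) m j 0 + x (m + 2)) := by
  rw [tropProd_succ, tropMul_tropStep_apply_zero, tropProd_succ (m := m),
    tropMul_tropStep_apply_one]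

theorem tropProd_tropStep_apply_zero (N : ℕ) (hx : Monotone x)
    (hxv : ∀ i ≤ N, (x i : WithTop ℝ) ≤ v + v) :
    (∀ k, 2 * k + 1 ≤ N →
      tropProd (fun i => tropStep v (x i)) (2 * k) 0 0 = sameParitySum x (2 * k) ∧
      tropProd (fun i => tropStep v (x i)) (2 * k + 1) 0 0 = v + sameParitySum x (2 * k)) ∧
    (∀ k, 2 * k + 2 ≤ N →
      tropProd (fun i => tropStep v (x i)) (2 * k + 1) 1 0 = sameParitySum x (2 * k + 1) ∧
      tropProd (fun i => tropStep v (x i)) (2 * k + 2) 1 0 = v + sameParitySum x (2 * k + 1)) := by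
  have hrec := tropProd_tropStep_recurrence (v := v) (x := x)
  constructor
  · intro k hk
    simpa using minPlus_recurrence_eq (a := fun m => tropProd _ m 0 0) N hx hxv (hrec 0) 0
      (by simp [sameParitySum, tropOne]) (by simp [tropProd_one, tropStep, sameParitySum]) k
      (by omega)
  · intro k hk
    have h₁ : tropProd (fun i => tropStep v (x i)) 1 1 0 = sameParitySum x 1 := by
      simp [tropProd_one, tropStep, sameParitySum]
    have h₂ : tropProd (fun i => tropStep v (x i)) 2 1 0 = v + sameParitySum x 1 := by
      rw [hrec 1 0, h₁]
      simp [tropOne, add_comm v]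
    rw [show 2 * k + 2 = 1 + 2 * k + 1 by omega, add_comm (2 * k)]
    exact minPlus_recurrence_eq (a := fun m => tropProd _ m 1 0) N hx hxv (hrec 1) 1 h₁ h₂ k
      (by omega)

end Products

/-- Valuation-matrix computation: with `V_i = [[v, 0], [p^{i-n}, ∞]]` for `1 ≤ i < n`
(`v ≥ 1`, possibly `∞`) and `V_n = [[0, c], [∞, ∞]]` (`c` arbitrary), the left column of
the tropical product `V_1 ⋯ V_{n-1} · V_n` is
`(v + p^{-2} + p^{-4} + ⋯ + p^{2-n}, p^{-1} + p^{-3} + ⋯ + p^{1-n})` for even `n`, and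
`(p^{-1} + p^{-3} + ⋯ + p^{2-n}, v + p^{-2} + p^{-4} + ⋯ + p^{1-n})` for odd `n`. -/
theorem tropical_valuation_matrix (p n : ℕ) (hp : p.Prime) (hn : 2 ≤ n)
    (v c : WithTop ℝ) (hv : 1 ≤ v) :
    let V : ℕ → Matrix (Fin 2) (Fin 2) (WithTop ℝ) := fun i =>
      if i = n then Matrix.of ![![0, c], ![⊤, ⊤]]
      else Matrix.of ![![v, 0], ![((((p : ℝ) ^ ((i : ℤ) - (n : ℤ))) : ℝ) : WithTop ℝ), ⊤]]
    let P : Matrix (Fin 2) (Fin 2) (WithTop ℝ) :=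
      (List.range n).foldl (fun M i => tropMul M (V (i + 1))) tropOne
    (Even n →
      P 0 0 = v + (((∑ k ∈ Finset.Icc 1 (n / 2 - 1), (p : ℝ) ^ (-(2 * (k : ℤ)))) : ℝ) : WithTop ℝ) ∧
      P 1 0 = (((∑ k ∈ Finset.Icc 1 (n / 2), (p : ℝ) ^ (-(2 * (k : ℤ)) + 1)) : ℝ) : WithTop ℝ)) ∧
    (Odd n →
      P 0 0 = (((∑ k ∈ Finset.Icc 1 ((n - 1) / 2), (p : ℝ) ^ (-(2 * (k : ℤ)) + 1)) : ℝ) : WithTop ℝ) ∧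
      P 1 0 = v + (((∑ k ∈ Finset.Icc 1 ((n - 1) / 2), (p : ℝ) ^ (-(2 * (k : ℤ)))) : ℝ) : WithTop ℝ)) := by
  intro V P
  have hp₁ : (1 : ℝ) ≤ p := mod_cast hp.one_lt.le
  set x : ℕ → ℝ := fun i => (p : ℝ) ^ ((i : ℤ) - n)
  have hx : Monotone x := fun i j hij => zpow_le_zpow_right₀ hp₁ (by omega)
  have hxv : ∀ i ≤ n, (x i : WithTop ℝ) ≤ v + v := fun i hi =>
    calc (x i : WithTop ℝ) ≤ 1 := by exact_mod_cast zpow_le_one_of_nonpos₀ hp₁ (by omega)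
      _ ≤ v := hv
      _ ≤ v + v := le_add_of_nonneg_left (zero_le_one.trans hv)
  obtain ⟨m, rfl⟩ : ∃ m, n = m + 1 := ⟨n - 1, by omega⟩
  have hP : ∀ j, P j 0 = tropProd (fun i => tropStep v (x i)) m j 0 := by
    intro j
    change tropProd V (m + 1) j 0 = _
    rw [tropProd_succ, show V (m + 1) = _ from if_pos rfl, tropMul_of_zero_top_apply_zero,
      tropProd_congr fun i _ hi => if_neg (by omega)]
    rfl
  obtain ⟨row₀, row₁⟩ := tropProd_tropStep_apply_zero (m + 1) hx hxv
  obtain ⟨t, rfl | rfl⟩ : ∃ t, m = 2 * t + 1 ∨ m = 2 * t + 2 := ⟨(m - 1) / 2, by omega⟩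
  · refine ⟨fun _ => ⟨?_, ?_⟩, fun h => absurd h (by simp [parity_simps])⟩
    · rw [hP, (row₀ t (by omega)).2]
      exact congrArg (fun s : ℝ => v + (s : WithTop ℝ))
        (sameParitySum_zpow _ _ _ _ _ (by omega) fun k => by push_cast; ring)
    · rw [hP, (row₁ t (by omega)).1]
      exact congrArg ((↑) : ℝ → WithTop ℝ)
        (sameParitySum_zpow _ _ _ _ _ (by omega) fun k => by push_cast; ring)
  · refine ⟨fun h => absurd h (by simp [parity_simps]), fun _ => ⟨?_, ?_⟩⟩
    · rw [hP, show 2 * t + 2 = 2 * (t + 1) by ring, (row₀ (t + 1) (by omega)).1]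
      exact congrArg ((↑) : ℝ → WithTop ℝ)
        (sameParitySum_zpow _ _ _ _ _ (by omega) fun k => by push_cast; ring)
    · rw [hP, (row₁ t (by omega)).2]
      exact congrArg (fun s : ℝ => v + (s : WithTop ℝ))
        (sameParitySum_zpow _ _ _ _ _ (by omega) fun k => by push_cast; ring)
end

section
/- Let 0 → A_n → B_n → C_n → D_n → 0 be a commutative ladder of exact sequences of finitely generated ℤ_p-modules with vertical transition maps π^A, π^B, π^C, π^D, each with finite kernel and cokernel. Define the Kobayashi rank ∇M := length_{ℤ_p}(ker π) − length_{ℤ_p}(coker π) + dim_{ℚ_p}(M_{n-1} ⊗ ℚ_p) for each system. Then ∇A − ∇B + ∇C − ∇D = 0 (additivity of Kobayashi ranks in exact sequences). -/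
open LinearMap Submodule Function





section card

variable {R : Type} [Ring R]

lemma card_eq_ker_mul_range' {M N : Type} [AddCommGroup M] [Module R M]
    [AddCommGroup N] [Module R N] [Finite M] (g : M →ₗ[R] N) :
    Nat.card M = Nat.card (ker g) * Nat.card (range g) := by
  rw [Submodule.card_eq_card_quotient_mul_card (ker g)]
  rw [Nat.card_congr g.quotKerEquivRange.toEquiv]

lemma card_six {K₁ K₂ K₃ K₄ K₅ K₆ : Type}
    [AddCommGroup K₁] [Module R K₁] [AddCommGroup K₂] [Module R K₂]
    [AddCommGroup K₃] [Module R K₃] [AddCommGroup K₄] [Module R K₄]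
    [AddCommGroup K₅] [Module R K₅] [AddCommGroup K₆] [Module R K₆]
    [Finite K₁] [Finite K₂] [Finite K₃] [Finite K₄] [Finite K₅] [Finite K₆]
    (d₁ : K₁ →ₗ[R] K₂) (d₂ : K₂ →ₗ[R] K₃) (d₃ : K₃ →ₗ[R] K₄)
    (d₄ : K₄ →ₗ[R] K₅) (d₅ : K₅ →ₗ[R] K₆)
    (h₁ : Injective d₁) (e₁₂ : Exact d₁ d₂) (e₂₃ : Exact d₂ d₃)
    (e₃₄ : Exact d₃ d₄) (e₄₅ : Exact d₄ d₅) (h₅ : Surjective d₅) :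
    Nat.card K₁ * Nat.card K₃ * Nat.card K₅
      = Nat.card K₂ * Nat.card K₄ * Nat.card K₆ := by
  have c1 : Nat.card K₁ = Nat.card (range d₁) :=
    Nat.card_congr (LinearEquiv.ofInjective d₁ h₁).toEquiv
  have c2 : Nat.card K₂ = Nat.card (range d₁) * Nat.card (range d₂) := by
    rw [card_eq_ker_mul_range' d₂, e₁₂.linearMap_ker_eq]
  have c3 : Nat.card K₃ = Nat.card (range d₂) * Nat.card (range d₃) := by
    rw [card_eq_ker_mul_range' d₃, e₂₃.linearMap_ker_eq]
  have c4 : Nat.card K₄ = Nat.card (range d₃) * Nat.card (range d₄) := by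
    rw [card_eq_ker_mul_range' d₄, e₃₄.linearMap_ker_eq]
  have c5 : Nat.card K₅ = Nat.card (range d₄) * Nat.card (range d₅) := by
    rw [card_eq_ker_mul_range' d₅, e₄₅.linearMap_ker_eq]
  have c6 : Nat.card K₆ = Nat.card (range d₅) := by
    rw [range_eq_top.mpr h₅]
    exact (Nat.card_congr (LinearEquiv.ofTop ⊤ rfl).toEquiv).symm
  rw [c1, c2, c3, c4, c5, c6]; ring

end card

/-- Snake-lemma counting for a ladder of short exact sequences. -/
lemma snake_card {R : Type} [CommRing R] {A₁ B₁ Q₁ A₀ B₀ Q₀ : Type}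
    [AddCommGroup A₁] [Module R A₁] [AddCommGroup B₁] [Module R B₁]
    [AddCommGroup Q₁] [Module R Q₁] [AddCommGroup A₀] [Module R A₀]
    [AddCommGroup B₀] [Module R B₀] [AddCommGroup Q₀] [Module R Q₀]
    (f₁ : A₁ →ₗ[R] B₁) (g₁ : B₁ →ₗ[R] Q₁) (f₀ : A₀ →ₗ[R] B₀) (g₀ : B₀ →ₗ[R] Q₀)
    (hf₁ : Injective f₁) (hfg₁ : Exact f₁ g₁) (hg₁ : Surjective g₁)
    (hf₀ : Injective f₀) (hfg₀ : Exact f₀ g₀) (hg₀ : Surjective g₀)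
    (πA : A₁ →ₗ[R] A₀) (πB : B₁ →ₗ[R] B₀) (πQ : Q₁ →ₗ[R] Q₀)
    (hcf : f₀.comp πA = πB.comp f₁) (hcg : g₀.comp πB = πQ.comp g₁)
    (hkA : Finite (ker πA)) (hcA : Finite (A₀ ⧸ range πA))
    (hkB : Finite (ker πB)) (hcB : Finite (B₀ ⧸ range πB))
    (hkQ : Finite (ker πQ)) (hcQ : Finite (Q₀ ⧸ range πQ)) :
    Nat.card (ker πA) * Nat.card (ker πQ) * Nat.card (B₀ ⧸ range πB)
      = Nat.card (ker πB) * Nat.card (A₀ ⧸ range πA) * Nat.card (Q₀ ⧸ range πQ) := by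
  haveI : Nonempty A₀ := ⟨0⟩
  -- the six maps
  have hd1 : ∀ x ∈ ker πA, f₁ x ∈ ker πB := by
    intro x hx
    simp only [mem_ker] at hx ⊢
    rw [← LinearMap.comp_apply, ← hcf, LinearMap.comp_apply, hx, map_zero]
  have hd2 : ∀ x ∈ ker πB, g₁ x ∈ ker πQ := by
    intro x hx
    simp only [mem_ker] at hx ⊢
    rw [← LinearMap.comp_apply, ← hcg, LinearMap.comp_apply, hx, map_zero]
  set d₁ : ker πA →ₗ[R] ker πB := f₁.restrict hd1 with hd₁def
  set d₂ : ker πB →ₗ[R] ker πQ := g₁.restrict hd2 with hd₂def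
  have h₄le : range πA ≤ comap f₀ (range πB) := by
    rintro _ ⟨a, rfl⟩
    exact ⟨f₁ a, (congr($hcf a)).symm⟩
  have h₅le : range πB ≤ comap g₀ (range πQ) := by
    rintro _ ⟨b, rfl⟩
    exact ⟨g₁ b, (congr($hcg b)).symm⟩
  set d₄ : (A₀ ⧸ range πA) →ₗ[R] (B₀ ⧸ range πB) := mapQ _ _ f₀ h₄le with hd₄def
  set d₅ : (B₀ ⧸ range πB) →ₗ[R] (Q₀ ⧸ range πQ) := mapQ _ _ g₀ h₅le with hd₅def
  -- the connecting map
  have hσ : g₁ ∘ surjInv hg₁ = _root_.id := funext fun x => rightInverse_surjInv hg₁ x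
  have hρ : invFun f₀ ∘ f₀ = _root_.id := funext fun x => leftInverse_invFun hf₀ x
  set δ : ker πQ →ₗ[R] (A₀ ⧸ range πA) :=
    SnakeLemma.δ πA πB πQ f₁ g₁ hfg₁ f₀ g₀ hfg₀ hcf hcg (surjInv hg₁) hσ (invFun f₀) hρ
      (ker πQ).subtype (exact_subtype_ker_map πQ) (range πA).mkQ (exact_map_mkQ_range πA)
      with hδdef
  -- exactness
  have h₁ : Injective d₁ := fun x y hxy =>
    Subtype.ext (hf₁ (congrArg Subtype.val hxy))
  have e₁₂ : Exact d₁ d₂ := by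
    intro x
    constructor
    · intro hx
      have hx' : g₁ x.1 = 0 := congrArg Subtype.val hx
      obtain ⟨a, ha⟩ := (hfg₁ x.1).mp hx'
      have hπa : πA a = 0 := by
        apply hf₀
        rw [map_zero, ← LinearMap.comp_apply, hcf, LinearMap.comp_apply, ha]
        exact x.2
      exact ⟨⟨a, hπa⟩, Subtype.ext ha⟩
    · rintro ⟨a, rfl⟩
      exact Subtype.ext (hfg₁.apply_apply_eq_zero a.1)
  have sub₂ : g₁.comp (ker πB).subtype = (ker πQ).subtype.comp d₂ := by
    ext x; rfl
  have e₂₃ : Exact d₂ δ :=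
    SnakeLemma.exact_δ_right πA πB πQ f₁ g₁ hfg₁ f₀ g₀ hfg₀ hcf hcg (surjInv hg₁) hσ
      (invFun f₀) hρ (ker πB).subtype (exact_subtype_ker_map πB) (ker πQ).subtype
      (exact_subtype_ker_map πQ) (range πA).mkQ (exact_map_mkQ_range πA)
      d₂ sub₂ (injective_subtype _)
  have mkq₄ : d₄.comp (range πA).mkQ = (range πB).mkQ.comp f₀ := by
    ext x; rfl
  have e₃₄ : Exact δ d₄ :=
    SnakeLemma.exact_δ_left πA πB πQ f₁ g₁ hfg₁ f₀ g₀ hfg₀ hcf hcg (surjInv hg₁) hσ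
      (invFun f₀) hρ (ker πQ).subtype (exact_subtype_ker_map πQ) (range πA).mkQ
      (exact_map_mkQ_range πA) (range πB).mkQ (exact_map_mkQ_range πB)
      d₄ mkq₄ (mkQ_surjective _)
  have e₄₅ : Exact d₄ d₅ := by
    intro x
    obtain ⟨b, rfl⟩ := Submodule.Quotient.mk_surjective _ x
    constructor
    · intro hx
      have : g₀ b ∈ range πQ := by
        rw [hd₅def, mapQ_apply] at hx
        exact (Submodule.Quotient.mk_eq_zero _).mp hx
      obtain ⟨q, hq⟩ := this
      obtain ⟨b₁, rfl⟩ := hg₁ q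
      have hker : g₀ (b - πB b₁) = 0 := by
        rw [map_sub, ← hq, ← LinearMap.comp_apply g₀ πB, hcg, LinearMap.comp_apply, sub_self]
      obtain ⟨a, ha⟩ := (hfg₀ _).mp hker
      refine ⟨Submodule.Quotient.mk a, ?_⟩
      rw [hd₄def, mapQ_apply, Submodule.Quotient.eq]
      rw [ha]
      exact ⟨-b₁, by simp⟩
    · rintro ⟨y, hy⟩
      obtain ⟨a, rfl⟩ := Submodule.Quotient.mk_surjective _ y
      rw [← hy, hd₄def, hd₅def, mapQ_apply, mapQ_apply, hfg₀.apply_apply_eq_zero,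
        Submodule.Quotient.mk_zero]
  have h₅ : Surjective d₅ := by
    intro x
    obtain ⟨q, rfl⟩ := Submodule.Quotient.mk_surjective _ x
    obtain ⟨b, rfl⟩ := hg₀ q
    exact ⟨Submodule.Quotient.mk b, by rw [hd₅def, mapQ_apply]⟩
  haveI := hkA; haveI := hkB; haveI := hkQ; haveI := hcA; haveI := hcB; haveI := hcQ
  exact card_six d₁ d₂ δ d₄ d₅ h₁ e₁₂ e₂₃ e₃₄ e₄₅ h₅

lemma padic_six {p : ℕ} [Fact p.Prime] {a b c d e f : ℕ} (ha : a ≠ 0) (hb : b ≠ 0)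
    (hc : c ≠ 0) (hd : d ≠ 0) (he : e ≠ 0) (hf : f ≠ 0) (h : a * b * c = d * e * f) :
    padicValNat p a + padicValNat p b + padicValNat p c
      = padicValNat p d + padicValNat p e + padicValNat p f := by
  have h2 := congrArg (padicValNat p) h
  rwa [padicValNat.mul (mul_ne_zero ha hb) hc, padicValNat.mul ha hb,
    padicValNat.mul (mul_ne_zero hd he) hf, padicValNat.mul hd he] at h2




/-- Additivity of Kobayashi ranks in exact sequences: given a commutative ladder of
four-term exact sequences `0 → A_i → B_i → C_i → D_i → 0` (`i = 1, 0`) of finitely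
generated `ℤ_p`-modules, with vertical transition maps `πA, πB, πC, πD` having finite
kernels and cokernels, and Kobayashi rank
`∇M = length(ker π) - length(coker π) + rank_{ℤ_p}(M₀)`, one has
`∇A - ∇B + ∇C - ∇D = 0`. -/
theorem kobayashi_rank_additive (p : ℕ) [Fact p.Prime]
    (A₁ B₁ C₁ D₁ A₀ B₀ C₀ D₀ : Type)
    [AddCommGroup A₁] [AddCommGroup B₁] [AddCommGroup C₁] [AddCommGroup D₁]
    [AddCommGroup A₀] [AddCommGroup B₀] [AddCommGroup C₀] [AddCommGroup D₀]
    [Module ℤ_[p] A₁] [Module ℤ_[p] B₁] [Module ℤ_[p] C₁] [Module ℤ_[p] D₁]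
    [Module ℤ_[p] A₀] [Module ℤ_[p] B₀] [Module ℤ_[p] C₀] [Module ℤ_[p] D₀]
    [Module.Finite ℤ_[p] A₁] [Module.Finite ℤ_[p] B₁] [Module.Finite ℤ_[p] C₁]
    [Module.Finite ℤ_[p] D₁] [Module.Finite ℤ_[p] A₀] [Module.Finite ℤ_[p] B₀]
    [Module.Finite ℤ_[p] C₀] [Module.Finite ℤ_[p] D₀]
    (f₁ : A₁ →ₗ[ℤ_[p]] B₁) (g₁ : B₁ →ₗ[ℤ_[p]] C₁) (h₁ : C₁ →ₗ[ℤ_[p]] D₁)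
    (f₀ : A₀ →ₗ[ℤ_[p]] B₀) (g₀ : B₀ →ₗ[ℤ_[p]] C₀) (h₀ : C₀ →ₗ[ℤ_[p]] D₀)
    (hf₁ : Function.Injective f₁) (hfg₁ : Function.Exact f₁ g₁)
    (hgh₁ : Function.Exact g₁ h₁) (hh₁ : Function.Surjective h₁)
    (hf₀ : Function.Injective f₀) (hfg₀ : Function.Exact f₀ g₀)
    (hgh₀ : Function.Exact g₀ h₀) (hh₀ : Function.Surjective h₀)
    (πA : A₁ →ₗ[ℤ_[p]] A₀) (πB : B₁ →ₗ[ℤ_[p]] B₀)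
    (πC : C₁ →ₗ[ℤ_[p]] C₀) (πD : D₁ →ₗ[ℤ_[p]] D₀)
    (hcommf : f₀.comp πA = πB.comp f₁) (hcommg : g₀.comp πB = πC.comp g₁)
    (hcommh : h₀.comp πC = πD.comp h₁)
    (hkA : Finite (LinearMap.ker πA)) (hcA : Finite (A₀ ⧸ LinearMap.range πA))
    (hkB : Finite (LinearMap.ker πB)) (hcB : Finite (B₀ ⧸ LinearMap.range πB))
    (hkC : Finite (LinearMap.ker πC)) (hcC : Finite (C₀ ⧸ LinearMap.range πC))
    (hkD : Finite (LinearMap.ker πD)) (hcD : Finite (D₀ ⧸ LinearMap.range πD)) :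
    ((padicValNat p (Nat.card (LinearMap.ker πA)) : ℤ)
        - padicValNat p (Nat.card (A₀ ⧸ LinearMap.range πA))
        + ((Module.rank ℤ_[p] A₀).toNat : ℤ))
      - ((padicValNat p (Nat.card (LinearMap.ker πB)) : ℤ)
        - padicValNat p (Nat.card (B₀ ⧸ LinearMap.range πB))
        + ((Module.rank ℤ_[p] B₀).toNat : ℤ))
      + ((padicValNat p (Nat.card (LinearMap.ker πC)) : ℤ)
        - padicValNat p (Nat.card (C₀ ⧸ LinearMap.range πC))
        + ((Module.rank ℤ_[p] C₀).toNat : ℤ))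
      - ((padicValNat p (Nat.card (LinearMap.ker πD)) : ℤ)
        - padicValNat p (Nat.card (D₀ ⧸ LinearMap.range πD))
        + ((Module.rank ℤ_[p] D₀).toNat : ℤ)) = 0 := by
  -- the middle object Q of the two short exact ladders
  have hQmem : ∀ x ∈ range g₁, πC x ∈ range g₀ := by
    rintro _ ⟨b, rfl⟩
    exact ⟨πB b, congr($hcommg b)⟩
  set πQ : range g₁ →ₗ[ℤ_[p]] range g₀ := πC.restrict hQmem with hπQdef
  -- ladder 1 : 0 → A → B → Q → 0
  have ex1 : Exact f₁ g₁.rangeRestrict := by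
    rw [LinearMap.exact_iff, ker_rangeRestrict, ← LinearMap.exact_iff]
    exact hfg₁
  have ex0 : Exact f₀ g₀.rangeRestrict := by
    rw [LinearMap.exact_iff, ker_rangeRestrict, ← LinearMap.exact_iff]
    exact hfg₀
  have comm1 : (g₀.rangeRestrict).comp πB = πQ.comp g₁.rangeRestrict := by
    refine LinearMap.ext fun b => Subtype.ext ?_
    simpa [hπQdef, LinearMap.restrict_apply] using congr($hcommg b)
  -- ladder 2 : 0 → Q → C → D → 0
  have ex1' : Exact ((range g₁).subtype) h₁ := by
    rw [LinearMap.exact_iff, Submodule.range_subtype, ← LinearMap.exact_iff]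
    exact hgh₁
  have ex0' : Exact ((range g₀).subtype) h₀ := by
    rw [LinearMap.exact_iff, Submodule.range_subtype, ← LinearMap.exact_iff]
    exact hgh₀
  have comm2 : ((range g₀).subtype).comp πQ = πC.comp (range g₁).subtype := by
    refine LinearMap.ext fun x => ?_
    simp [hπQdef, LinearMap.restrict_apply]
  -- finiteness of kernel and cokernel of πQ
  haveI : Finite (ker πQ) := by
    refine Finite.of_injective (fun x : ker πQ =>
      (⟨x.1.1, ?_⟩ : ker πC)) ?_
    · rw [LinearMap.mem_ker]
      have h2 : πQ x.1 = 0 := x.2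
      have h3 : (πC x.1.1 : C₀) = ((πQ x.1 : range g₀) : C₀) := rfl
      rw [h3, h2]
      simp
    · intro x y hxy
      have h4 := Subtype.ext_iff.mp hxy
      exact Subtype.ext (Subtype.ext h4)
  have hQle : range πB ≤ comap g₀.rangeRestrict (range πQ) := by
    rintro _ ⟨b, rfl⟩
    exact ⟨g₁.rangeRestrict b, (congr($comm1 b)).symm⟩
  haveI : Finite ((range g₀ : Submodule ℤ_[p] C₀) ⧸ range πQ) := by
    refine Finite.of_surjective (mapQ _ _ g₀.rangeRestrict hQle) ?_
    intro x
    obtain ⟨q, rfl⟩ := Submodule.Quotient.mk_surjective _ x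
    obtain ⟨b, hb⟩ : ∃ b, g₀.rangeRestrict b = q := g₀.surjective_rangeRestrict q
    exact ⟨Submodule.Quotient.mk b, by rw [mapQ_apply, hb]⟩
  -- apply the snake counting to both ladders
  have E1 := snake_card f₁ g₁.rangeRestrict f₀ g₀.rangeRestrict hf₁ ex1
    g₁.surjective_rangeRestrict hf₀ ex0 g₀.surjective_rangeRestrict πA πB πQ
    hcommf comm1 hkA hcA hkB hcB inferInstance inferInstance
  have E2 := snake_card ((range g₁).subtype) h₁ ((range g₀).subtype) h₀
    (injective_subtype _) ex1' hh₁ (injective_subtype _) ex0' hh₀ πQ πC πD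
    comm2 hcommh inferInstance inferInstance hkC hcC hkD hcD
  -- positivity of all cards
  haveI := hkA; haveI := hcA; haveI := hkB; haveI := hcB
  haveI := hkC; haveI := hcC; haveI := hkD; haveI := hcD
  have pos : ∀ (X : Type) [AddCommGroup X] [Finite X], Nat.card X ≠ 0 := by
    intro X _ _
    exact Nat.card_pos.ne'
  have V1 := padic_six (p := p) (pos _) (pos _) (pos _) (pos _) (pos _) (pos _) E1
  have V2 := padic_six (p := p) (pos _) (pos _) (pos _) (pos _) (pos _) (pos _) E2
  -- rank additivity
  have rB : Module.rank ℤ_[p] B₀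
      = Module.rank ℤ_[p] (range g₀) + Module.rank ℤ_[p] A₀ := by
    rw [← Submodule.rank_quotient_add_rank (ker g₀)]
    congr 1
    · exact (g₀.quotKerEquivRange).rank_eq
    · rw [hfg₀.linearMap_ker_eq]
      exact ((LinearEquiv.ofInjective f₀ hf₀).rank_eq).symm
  have rC : Module.rank ℤ_[p] C₀
      = Module.rank ℤ_[p] D₀ + Module.rank ℤ_[p] (range g₀) := by
    rw [← Submodule.rank_quotient_add_rank (ker h₀)]
    congr 1
    · exact (h₀.quotKerEquivOfSurjective hh₀).rank_eq
    · rw [hgh₀.linearMap_ker_eq]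
  haveI : Module.Finite ℤ_[p] (range g₀ : Submodule ℤ_[p] C₀) := by
    have : IsNoetherian ℤ_[p] C₀ := isNoetherian_of_isNoetherianRing_of_finite _ _
    exact Module.Finite.iff_fg.mpr (IsNoetherian.noetherian _)
  have rEq : Module.rank ℤ_[p] A₀ + Module.rank ℤ_[p] C₀
      = Module.rank ℤ_[p] B₀ + Module.rank ℤ_[p] D₀ := by
    rw [rB, rC]; ring
  have rNat : (Module.rank ℤ_[p] A₀).toNat + (Module.rank ℤ_[p] C₀).toNat
      = (Module.rank ℤ_[p] B₀).toNat + (Module.rank ℤ_[p] D₀).toNat := by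
    have := congrArg Cardinal.toNat rEq
    rwa [Cardinal.toNat_add (Module.rank_lt_aleph0 _ _) (Module.rank_lt_aleph0 _ _),
      Cardinal.toNat_add (Module.rank_lt_aleph0 _ _) (Module.rank_lt_aleph0 _ _)] at this
  omega
end
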